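/- Let m ≥ 1 and b ≥ 1 be integers with b ≤ m, let σ ∈ {0,1}, τ_1, …, τ_m ∈ {0,1}, and let β ∈ {0, …, 2^b − 1} with binary digits β = Σ_{j=1}^{b} β_j·2^{b−j}. Then Σ_{α=0}^{2^b−1} exp(−2πi·Σ_{j=1}^{b} α_j·2^{−j}·[0.τ_m … τ_{m−b+j}]) · χ^α((σ + β/2^b)/2) = exp(−2πi·σ·[0.0 τ_m τ_{m−1} … τ_{m−b+1}]) · exp(−2πi·Σ_{j=2}^{b} β_{j−1}·2^{−j}·[0.τ_m … τ_{m−b+j}]), where α = Σ_{j=1}^{b} α_j·2^{b−j}. -/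

import Mathlib

/-- `χ^α`: the indicator function of the dyadic interval `[α/2^b, (α+1)/2^b)`. -/
noncomputable def chi (b : ℕ) (α : Fin (2 ^ b)) (x : ℝ) : ℝ :=
  if ((α : ℕ) : ℝ) / 2 ^ b ≤ x ∧ x < (((α : ℕ) : ℝ) + 1) / 2 ^ b then 1 else 0

/-- The `j`-th binary digit (most significant first, `j` 0-based here for the paper's
1-based `j`) of `β ∈ {0,…,2^b−1}`: `β = Σ_{j=1}^b β_j 2^{b−j}`. -/
def digit (b : ℕ) (β : Fin (2 ^ b)) (j : Fin b) : ℕ :=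
  (β : ℕ) / 2 ^ (b - ((j : ℕ) + 1)) % 2

/-- The truncated binary decimal `[0.τ_m τ_{m−1} … τ_{m−b+j}] = Σ_{l=m−b+j}^m τ_l 2^{l−m−1}`
(here the `Fin b`-index `j` corresponds to the paper's 1-based `j`). -/
noncomputable def dtail (m b : ℕ) (τ : Fin m → Fin 2) (j : Fin b) : ℝ :=
  ∑ l ∈ Finset.univ.filter (fun l : Fin m => m - b + ((j : ℕ) + 1) ≤ (l : ℕ) + 1),
    ((τ l : ℕ) : ℝ) * (2 : ℝ) ^ ((l : ℕ) + 1) / (2 : ℝ) ^ (m + 1)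

/-- The key summation identity in the AQFT MPO recursion:
`Σ_{α=0}^{2^b−1} exp(−2πi Σ_j α_j 2^{−j} [0.τ_m…τ_{m−b+j}])·χ^α((σ+β/2^b)/2)
 = exp(−2πi σ [0.0τ_m…τ_{m−b+1}])·exp(−2πi Σ_{j=2}^b β_{j−1} 2^{−j} [0.τ_m…τ_{m−b+j}])`,
where `[0.0τ_m…τ_{m−b+1}] = Σ_{j=m−b+1}^m τ_j 2^{j−m−2}`. -/
theorem aqft_indicator_sum (m b : ℕ) (hm : 1 ≤ m) (hb : 1 ≤ b) (hbm : b ≤ m)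
    (σ : Fin 2) (τ : Fin m → Fin 2) (β : Fin (2 ^ b)) :
    ∑ α : Fin (2 ^ b),
      Complex.exp (-2 * (Real.pi : ℂ) * Complex.I *
          ((∑ j : Fin b, (digit b α j : ℝ) / 2 ^ ((j : ℕ) + 1) * dtail m b τ j : ℝ) : ℂ)) *
        ((chi b α ((((σ : ℕ) : ℝ) + ((β : ℕ) : ℝ) / 2 ^ b) / 2) : ℝ) : ℂ) =
      Complex.exp (-2 * (Real.pi : ℂ) * Complex.I * ((σ : ℕ) : ℂ) *
          ((∑ l ∈ Finset.univ.filter (fun l : Fin m => m - b + 1 ≤ (l : ℕ) + 1),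
            ((τ l : ℕ) : ℝ) * (2 : ℝ) ^ ((l : ℕ) + 1) / (2 : ℝ) ^ (m + 2) : ℝ) : ℂ)) *
        Complex.exp (-2 * (Real.pi : ℂ) * Complex.I *
          ((∑ i : Fin (b - 1),
            (digit b β ⟨(i : ℕ), by have := i.2; omega⟩ : ℝ) / 2 ^ ((i : ℕ) + 2) *
              dtail m b τ ⟨(i : ℕ) + 1, by have := i.2; omega⟩ : ℝ) : ℂ)) := by
  obtain ⟨n, rfl⟩ : ∃ n, b = n + 1 := ⟨b - 1, by omega⟩
  have hσ : (σ : ℕ) < 2 := σ.2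
  have hβ : (β : ℕ) < 2 ^ (n + 1) := β.2
  have h2n : (0:ℕ) < 2 ^ n := Nat.pow_pos (by norm_num)
  have hβ2 : (β : ℕ) / 2 < 2 ^ n := by
    rw [Nat.div_lt_iff_lt_mul (by norm_num)]
    have : 2 ^ (n+1) = 2 ^ n * 2 := by ring
    omega
  have hAlt : (σ : ℕ) * 2 ^ n + (β : ℕ) / 2 < 2 ^ (n + 1) := by
    have : 2 ^ (n+1) = 2 ^ n * 2 := by ring
    nlinarith
  set A : ℕ := (σ : ℕ) * 2 ^ n + (β : ℕ) / 2 with hA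
  set αs : Fin (2 ^ (n + 1)) := ⟨A, hAlt⟩ with hαs
  set x : ℝ := (((σ : ℕ) : ℝ) + ((β : ℕ) : ℝ) / 2 ^ (n + 1)) / 2 with hx
  have hpow : (0:ℝ) < (2:ℝ) ^ (n+1) := by positivity
  have hd1 : (((β : ℕ) / 2 : ℕ) : ℝ) * 2 ≤ ((β : ℕ) : ℝ) := by
    exact_mod_cast Nat.cast_le.mpr (Nat.div_mul_le_self _ 2)
  have hd2 : ((β : ℕ) : ℝ) < (((β : ℕ) / 2 : ℕ) : ℝ) * 2 + 2 := by
    exact_mod_cast Nat.cast_lt.mpr (by omega : (β:ℕ) < (β:ℕ)/2 * 2 + 2)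
  have hxval : x * 2 ^ (n + 1) = ((σ:ℕ):ℝ) * 2 ^ n + ((β:ℕ):ℝ) / 2 := by
    rw [hx]; field_simp; ring
  have hxmem : ((A : ℕ) : ℝ) ≤ x * 2 ^ (n+1) ∧ x * 2 ^ (n+1) < ((A:ℕ):ℝ) + 1 := by
    rw [hxval, hA]
    push_cast
    constructor <;> nlinarith
  have hchi1 : chi (n+1) αs x = 1 := by
    rw [chi, if_pos]
    refine ⟨?_, ?_⟩
    · rw [div_le_iff₀ hpow]; exact hxmem.1
    · rw [lt_div_iff₀ hpow]; exact hxmem.2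
  have hchi0 : ∀ α : Fin (2 ^ (n+1)), α ≠ αs → chi (n+1) α x = 0 := by
    intro α hne
    rw [chi, if_neg]
    rintro ⟨h1, h2⟩
    rw [div_le_iff₀ hpow] at h1
    rw [lt_div_iff₀ hpow] at h2
    apply hne
    apply Fin.ext
    have hlt : ((α:ℕ):ℝ) < (A:ℝ) + 1 := lt_of_le_of_lt h1 hxmem.2
    have hgt : (A:ℝ) < ((α:ℕ):ℝ) + 1 := lt_of_le_of_lt hxmem.1 h2
    have h1' : (α:ℕ) < A + 1 := by exact_mod_cast hlt
    have h2' : A < (α:ℕ) + 1 := by exact_mod_cast hgt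
    show (α:ℕ) = A
    omega
  rw [Finset.sum_eq_single αs
    (by intro α _ hne; rw [hchi0 α hne]; push_cast; ring)
    (by intro h; exact absurd (Finset.mem_univ αs) h)]
  rw [hchi1]
  have hdig0 : digit (n+1) αs ⟨0, Nat.succ_pos n⟩ = (σ : ℕ) := by
    show A / 2 ^ (n + 1 - (0 + 1)) % 2 = (σ:ℕ)
    simp only [Nat.add_sub_cancel]
    rw [hA, Nat.add_comm, Nat.add_mul_div_right _ _ h2n, Nat.div_eq_of_lt hβ2]
    omega
  have hdigS : ∀ k : ℕ, ∀ hk : k < n,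
      digit (n+1) αs ⟨k+1, by omega⟩ = digit (n+1) β ⟨k, by omega⟩ := by
    intro k hk
    show A / 2 ^ (n + 1 - (k + 1 + 1)) % 2 = (β:ℕ) / 2 ^ (n + 1 - (k + 1)) % 2
    have e1 : n + 1 - (k + 1 + 1) = n - k - 1 := by omega
    have e2 : n + 1 - (k + 1) = n - k := by omega
    rw [e1, e2, hA]
    have e3 : (σ:ℕ) * 2 ^ n = (σ:ℕ) * 2 ^ (k+1) * 2 ^ (n - k - 1) := by
      rw [mul_assoc, ← pow_add]
      congr 2
      omega
    rw [Nat.add_comm, e3, Nat.add_mul_div_right _ _ (Nat.pow_pos (by norm_num)),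
      Nat.div_div_eq_div_mul]
    have e4 : 2 * 2 ^ (n - k - 1) = 2 ^ (n - k) := by
      rw [← pow_succ']
      congr 1
      omega
    rw [e4]
    have e5 : (σ:ℕ) * 2 ^ (k+1) = 2 * ((σ:ℕ) * 2 ^ k) := by ring
    rw [e5]
    omega
  set S1 : ℝ := ∑ l ∈ Finset.univ.filter (fun l : Fin m => m - (n+1) + 1 ≤ (l : ℕ) + 1),
      ((τ l : ℕ) : ℝ) * (2 : ℝ) ^ ((l : ℕ) + 1) / (2 : ℝ) ^ (m + 2) with hS1
  set S2 : ℝ := ∑ i : Fin (n + 1 - 1),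
      (digit (n+1) β ⟨(i : ℕ), by have := i.2; omega⟩ : ℝ) / 2 ^ ((i : ℕ) + 2) *
        dtail m (n+1) τ ⟨(i : ℕ) + 1, by have := i.2; omega⟩ with hS2
  have hsum : ∑ j : Fin (n+1), (digit (n+1) αs j : ℝ) / 2 ^ ((j:ℕ)+1) * dtail m (n+1) τ j
      = ((σ:ℕ):ℝ) * S1 + S2 := by
    rw [Fin.sum_univ_succ]
    congr 1
    · have h0 : (0 : Fin (n+1)) = ⟨0, Nat.succ_pos n⟩ := rfl
      rw [h0, hdig0, hS1, dtail, Finset.mul_sum, Finset.mul_sum]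
      refine Finset.sum_congr rfl fun l _ => ?_
      have : (2:ℝ) ^ (m+2) = 2 ^ (m+1) * 2 := by ring
      rw [this]
      ring
    · rw [hS2]
      refine Finset.sum_congr rfl fun i _ => ?_
      have hi : (i : ℕ) < n := by have := i.2; omega
      have hsucc : (Fin.succ i : Fin (n+1)) = ⟨(i:ℕ) + 1, by omega⟩ := rfl
      rw [hsucc, hdigS (i:ℕ) hi]
  rw [hsum]
  push_cast
  rw [mul_one, mul_add, Complex.exp_add]
  congr 2
  ring
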